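/- arXiv:1308.1434 — 4 statements merged into one kernel-verified Lean document; each statement's English description precedes it below -/
import Mathlib

section
/- For every n ≥ 0, the kP-module E_n is isomorphic, in the functor category P ⥤ ModuleCat k, to the coproduct, taken over all n-chains c of P, of the functors k[Hom_P(c(n), −)]; in particular, each E_n is a free kP-module with basis given by the n-chains of P, the chain c corresponding to a basis element at the object c(n) (its apex). -/
open CategoryTheory CategoryTheory.Limits

variable (k : Type) [CommRing k] (P : Type) [PartialOrder P]

/-- The functor sending `a ∈ P` to the set of `n`-chains of `P` with apex `≤ a`,
i.e. strictly increasing maps `c : {0 < 1 < … < n} → P` with `c(n) ≤ a`. -/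
def chainsSetFunctor (n : ℕ) : P ⥤ Type where
  obj a := {c : Fin (n + 1) → P // StrictMono c ∧ c (Fin.last n) ≤ a}
  map {a b} h := TypeCat.ofHom fun c => ⟨c.1, c.2.1, c.2.2.trans (leOfHom h)⟩

/-- The `kP`-module `E_n` of `n`-chains of the order complex of `P`:
`E_n(a)` is the free `k`-module on the set of `n`-chains of `P` with apex `≤ a`. -/
noncomputable def En (n : ℕ) : P ⥤ ModuleCat k :=
  chainsSetFunctor P n ⋙ ModuleCat.free k

/-- The functor `k[Hom_P(α,−)] : P ⥤ ModuleCat k`, sending `β ∈ P` to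
the free `k`-module on `Hom_P(α,β)` (so `k` if `α ≤ β` and `0` otherwise). -/
noncomputable def freeShiftP (α : P) : P ⥤ ModuleCat k :=
  coyoneda.obj (Opposite.op α) ⋙ ModuleCat.free k

/-- The family of functors `k[Hom_P(c(n),−)]` indexed by the `n`-chains `c` of `P`. -/
noncomputable def apexFamily (n : ℕ) (c : {c : Fin (n + 1) → P // StrictMono c}) :
    P ⥤ ModuleCat k :=
  freeShiftP k P (c.1 (Fin.last n))

/-! As a functor to sets, the chains functor is the disjoint union of the corepresentables
`Hom_P(c(n), −)`: a chain with apex `≤ a` is the image of its own apex chain under `c(n) ≤ a`,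
and of no other. Taking free modules is a left adjoint, so it preserves this coproduct, also
after whiskering, since colimits of functors are computed pointwise. -/

universe v u w

section CorepresentableCofan

variable {C : Type u} [Category.{v} C] {ι : Type w} (F : C ⥤ Type v) (X : ι → C)
  (x : ∀ i, F.obj (X i))

def corepresentableCofan : Cofan fun i => coyoneda.obj (Opposite.op (X i)) :=
  Cofan.mk F fun i => coyonedaEquiv.symm (x i)

variable {F X x}

noncomputable def corepresentableCofanIsColimit
    (h : ∀ a, Function.Bijective fun p : Σ i, X i ⟶ a => F.map p.2 (x p.1)) :
    IsColimit (corepresentableCofan F X x) :=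
  evaluationJointlyReflectsColimits _ fun a =>
    (isColimitMapCoconeCofanMkEquiv _ _ _).symm <| Nonempty.some <|
      (Cofan.nonempty_isColimit_iff_bijective_fromSigma _).2 (h a)

end CorepresentableCofan

def apexChain {n : ℕ} (c : {c : Fin (n + 1) → P // StrictMono c}) :
    (chainsSetFunctor P n).obj (c.1 (Fin.last n)) :=
  ⟨c.1, c.2, le_rfl⟩

lemma bijective_map_apexChain (n : ℕ) (a : P) :
    Function.Bijective fun p : Σ c : {c : Fin (n + 1) → P // StrictMono c}, c.1 (Fin.last n) ⟶ a =>
      (chainsSetFunctor P n).map p.2 (apexChain P p.1) := by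
  constructor
  · rintro ⟨⟨c, hc⟩, f⟩ ⟨⟨c', hc'⟩, f'⟩ h
    obtain rfl : c = c' := congrArg Subtype.val h
    rw [Subsingleton.elim f f']
  · rintro ⟨c, hc, hle⟩
    exact ⟨⟨⟨c, hc⟩, homOfLE hle⟩, rfl⟩

noncomputable def chainCofan (n : ℕ) : Cofan (apexFamily k P n) :=
  Cofan.mk (En k P n) fun c =>
    Functor.whiskerRight (coyonedaEquiv.symm (apexChain P c)) (ModuleCat.free k)

noncomputable def chainCofanIsColimit (n : ℕ) : IsColimit (chainCofan k P n) :=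
  have := (ModuleCat.adj k).leftAdjoint_preservesColimits
  isColimitCofanMkObjOfIsColimit ((Functor.whiskeringRight _ _ _).obj (ModuleCat.free k)) _ _
    (corepresentableCofanIsColimit (bijective_map_apexChain P n))

/-- For every `n ≥ 0`, the `kP`-module `E_n` is isomorphic, in the
functor category `P ⥤ ModuleCat k`, to the coproduct, taken over all `n`-chains `c`
of `P`, of the functors `k[Hom_P(c(n), −)]`; in particular, each `E_n` is a free
`kP`-module with basis given by the `n`-chains of `P`, the chain `c` corresponding
to a basis element at the object `c(n)` (its apex). -/
theorem En_iso_coproduct_of_corepresentables (n : ℕ) :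
    ∃ e : (∐ apexFamily k P n) ≅ En k P n,
      ∀ c : {c : Fin (n + 1) → P // StrictMono c},
        (e.hom.app (c.1 (Fin.last n)))
            ((Sigma.ι (apexFamily k P n) c).app (c.1 (Fin.last n))
              (Finsupp.single (𝟙 (c.1 (Fin.last n))) (1 : k))) =
          Finsupp.single ⟨c.1, c.2, le_refl _⟩ (1 : k) := by
  refine ⟨colimit.isoColimitCocone ⟨_, chainCofanIsColimit k P n⟩, fun c => ?_⟩
  have h := congrArg (fun f => f.app _ (ModuleCat.freeMk (𝟙 (c.1 (Fin.last n)))))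
    (colimit.isoColimitCocone_ι_hom ⟨_, chainCofanIsColimit k P n⟩ ⟨c⟩)
  simp only [NatTrans.comp_app, ModuleCat.hom_comp] at h
  exact h.trans (ModuleCat.free_map_apply _ _)
end

section
/- For every k-module T, the map sending a k-linear map g : N ⊗_{kJ} M → T to the family of maps (j ↦ (m ↦ (n ↦ g([ι_j(n ⊗ m)])))) is a bijection from the set of k-linear maps N ⊗_{kJ} M → T to the set of natural transformations M ⟶ hom_k(N,T), where hom_k(N,T) is the kJ-module sending an object j to the k-module of k-linear maps N(j) → T and a morphism u : j → i to the map f ↦ f ∘ N(u). (The functor hom_k(N,−) is right adjoint to N ⊗_{kJ} (−).) -/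
open CategoryTheory TensorProduct DirectSum

variable (k : Type) [CommRing k] (J : Type) [SmallCategory J] [DecidableEq J]

/-- The direct sum `⨁_{j ∈ obj J} N(j) ⊗_k M(j)`. -/
noncomputable abbrev kJTensorCarrier (N : Jᵒᵖ ⥤ ModuleCat k) (M : J ⥤ ModuleCat k) :=
  ⨁ (j : J), (↥(N.obj (Opposite.op j)) ⊗[k] ↥(M.obj j))

/-- The relation submodule `S`, generated by all elements
`ι_j(N(u)(n) ⊗ m) − ι_i(n ⊗ M(u)(m))` for morphisms `u : j → i` in `J`,
`n ∈ N(i)` and `m ∈ M(j)`. -/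
noncomputable def kJTensorRel (N : Jᵒᵖ ⥤ ModuleCat k) (M : J ⥤ ModuleCat k) :
    Submodule k (kJTensorCarrier k J N M) :=
  Submodule.span k
    { x | ∃ (j i : J) (u : j ⟶ i) (n : N.obj (Opposite.op i)) (m : M.obj j),
        x = DirectSum.lof k J (fun j => ↥(N.obj (Opposite.op j)) ⊗[k] ↥(M.obj j)) j
              (N.map u.op n ⊗ₜ[k] m) -
            DirectSum.lof k J (fun j => ↥(N.obj (Opposite.op j)) ⊗[k] ↥(M.obj j)) i
              (n ⊗ₜ[k] M.map u m) }

/-- The tensor product `N ⊗_{kJ} M` of a `kJᵒᵖ`-module `N` and a `kJ`-module `M`: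
the quotient of `⨁_{j ∈ obj J} N(j) ⊗_k M(j)` by the relation submodule `S`. -/
noncomputable abbrev kJTensor (N : Jᵒᵖ ⥤ ModuleCat k) (M : J ⥤ ModuleCat k) :=
  kJTensorCarrier k J N M ⧸ kJTensorRel k J N M

/-- The `kJ`-module `hom_k(N,T)`, sending an object `j` to the `k`-module of
`k`-linear maps `N(j) → T` and a morphism `u : j → i` to the map `f ↦ f ∘ N(u)`. -/
@[reducible] noncomputable def homkFunctor (N : Jᵒᵖ ⥤ ModuleCat k) (T : Type) [AddCommGroup T]
    [Module k T] : J ⥤ ModuleCat k where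
  obj j := ModuleCat.of k (↥(N.obj (Opposite.op j)) →ₗ[k] T)
  map {j i} u := ModuleCat.ofHom (LinearMap.lcomp k T (N.map u.op).hom)
  map_id j := by
    ext f : 2
    show f.comp (N.map (𝟙 (Opposite.op j))).hom = f
    rw [N.map_id]
    rfl
  map_comp {j i l} u v := by
    ext f : 2
    show f.comp (N.map ((u ≫ v).op)).hom = (f.comp (N.map u.op).hom).comp (N.map v.op).hom
    rw [show (u ≫ v).op = v.op ≫ u.op from rfl, N.map_comp]
    rfl

/-!
A linear map out of `N ⊗_{kJ} M` is the same as a family of bilinear maps `N(j) × M(j) → T`,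
i.e. of linear maps `M(j) → hom_k(N(j), T)`, that kills the relations `S`; killing the relation
attached to `u : j → i` says precisely that this family is natural at `u`.
-/

namespace kJTensor

variable {k J} {N : Jᵒᵖ ⥤ ModuleCat k} {M : J ⥤ ModuleCat k}
  {T : Type} [AddCommGroup T] [Module k T]

/-- The class `[ι_j(n ⊗ m)]`, bilinear in `n` and `m`. -/
noncomputable def mkTmul (j : J) :
    N.obj (Opposite.op j) →ₗ[k] M.obj j →ₗ[k] kJTensor k J N M :=
  (TensorProduct.mk k _ _).compr₂
    ((kJTensorRel k J N M).mkQ ∘ₗ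
      DirectSum.lof k J (fun j => ↥(N.obj (Opposite.op j)) ⊗[k] ↥(M.obj j)) j)

theorem mkTmul_map {j i : J} (u : j ⟶ i) (n : N.obj (Opposite.op i)) (m : M.obj j) :
    mkTmul j (N.map u.op n) m = mkTmul i n (M.map u m) :=
  (Submodule.Quotient.eq _).2 (Submodule.subset_span ⟨j, i, u, n, m, rfl⟩)

theorem hom_ext {f g : kJTensor k J N M →ₗ[k] T}
    (h : ∀ j n m, f (mkTmul j n m) = g (mkTmul j n m)) : f = g :=
  Submodule.linearMap_qext _ <| DirectSum.linearMap_ext _ fun j =>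
    TensorProduct.ext' fun n m => h j n m

noncomputable def toNatTrans (g : kJTensor k J N M →ₗ[k] T) : M ⟶ homkFunctor k J N T where
  app j := ModuleCat.ofHom ((mkTmul j).compr₂ g).flip
  naturality {j i} u := by
    ext m : 2
    refine LinearMap.ext fun n => ?_
    show g (mkTmul i n (M.map u m)) = g (mkTmul j (N.map u.op n) m)
    rw [mkTmul_map]

noncomputable def liftCarrier (α : M ⟶ homkFunctor k J N T) : kJTensorCarrier k J N M →ₗ[k] T :=
  DirectSum.toModule k J T fun j => TensorProduct.lift (α.app j).hom.flip

theorem kJTensorRel_le_ker_liftCarrier (α : M ⟶ homkFunctor k J N T) :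
    kJTensorRel k J N M ≤ LinearMap.ker (liftCarrier α) := by
  refine Submodule.span_le.2 ?_
  rintro _ ⟨j, i, u, n, m, rfl⟩
  have hnat := LinearMap.congr_fun (ConcreteCategory.congr_hom (α.naturality u) m) n
  simp only [liftCarrier, SetLike.mem_coe, LinearMap.mem_ker, map_sub, DirectSum.toModule_lof,
    TensorProduct.lift.tmul, sub_eq_zero]
  exact hnat.symm

noncomputable def lift (α : M ⟶ homkFunctor k J N T) : kJTensor k J N M →ₗ[k] T :=
  (kJTensorRel k J N M).liftQ (liftCarrier α) (kJTensorRel_le_ker_liftCarrier α)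

theorem lift_mkTmul (α : M ⟶ homkFunctor k J N T) (j : J) (n : N.obj (Opposite.op j))
    (m : M.obj j) : lift α (mkTmul j n m) = (α.app j).hom m n := by
  rw [lift, mkTmul, LinearMap.compr₂_apply, TensorProduct.mk_apply, LinearMap.comp_apply,
    Submodule.mkQ_apply, Submodule.liftQ_apply, liftCarrier, DirectSum.toModule_lof,
    TensorProduct.lift.tmul]
  rfl

end kJTensor

/-- For every `k`-module `T`, the map sending a `k`-linear map
`g : N ⊗_{kJ} M → T` to the family `(j ↦ (m ↦ (n ↦ g([ι_j(n ⊗ m)]))))` is a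
bijection from the `k`-linear maps `N ⊗_{kJ} M → T` to the natural transformations
`M ⟶ hom_k(N,T)`.  (The functor `hom_k(N,−)` is right adjoint to `N ⊗_{kJ} (−)`.) -/
theorem tensor_hom_adjunction (N : Jᵒᵖ ⥤ ModuleCat k) (M : J ⥤ ModuleCat k)
    (T : Type) [AddCommGroup T] [Module k T] :
    ∃ e : (kJTensor k J N M →ₗ[k] T) ≃ (M ⟶ homkFunctor k J N T),
      ∀ (g : kJTensor k J N M →ₗ[k] T) (j : J) (m : M.obj j)
        (n : N.obj (Opposite.op j)),
          (show ↥(N.obj (Opposite.op j)) →ₗ[k] T from (e g).app j m) n =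
            g (Submodule.Quotient.mk
                (DirectSum.lof k J (fun j => ↥(N.obj (Opposite.op j)) ⊗[k] ↥(M.obj j)) j
                  (n ⊗ₜ[k] m))) := by
  refine ⟨{
    toFun := kJTensor.toNatTrans
    invFun := kJTensor.lift
    left_inv := fun g => kJTensor.hom_ext fun j n m => kJTensor.lift_mkTmul _ j n m
    right_inv := fun α => ?_ }, fun g j m n => rfl⟩
  ext j : 3
  exact LinearMap.ext fun m => LinearMap.ext fun n => kJTensor.lift_mkTmul α j n m
end

section
/- Assume P is a finite atomic poset. A set Z ∈ M(P) is a minimal element of M(P) \ {∅} (i.e., Z ≠ ∅ and every W ∈ M(P) with W ⊆ Z satisfies W = ∅ or W = Z) if and only if Z = {a} for some minimal element a of P. (The atoms of the lattice M(P) are exactly the singletons of minimal elements of P.) -/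
variable (P : Type) [PartialOrder P] [Fintype P]

/-- `A_x`: the set of minimal elements `a` of `P` with `a ≤ x`. -/
def atomsBelow (x : P) : Set P := {a | IsMin a ∧ a ≤ x}

/-- `A`: the set of all minimal elements of `P`. -/
def atomSet : Set P := {a | IsMin a}

/-- `P` is atomic if every `x ∈ P` is the least upper bound in `P` of `A_x`. -/
def IsAtomicPoset : Prop := ∀ x : P, IsLUB (atomsBelow P x) x

/-- `M(P)`: the collection of all subsets of `P` of the form `A ∩ ⋂_{x ∈ S} A_x`,
where `S` ranges over all (possibly empty) subsets of `P`. -/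
def meetClosure : Set (Set P) :=
  {Z | ∃ S : Set P, Z = atomSet P ∩ ⋂ x ∈ S, atomsBelow P x}

/-- Assume `P` is a finite atomic poset.  A set `Z ∈ M(P)` is a
minimal element of `M(P) \ {∅}` (i.e., `Z ≠ ∅` and every `W ∈ M(P)` with `W ⊆ Z`
satisfies `W = ∅` or `W = Z`) if and only if `Z = {a}` for some minimal element
`a` of `P`.  (The atoms of the lattice `M(P)` are exactly the singletons of
minimal elements of `P`.) -/
theorem meetClosure_atoms (h : IsAtomicPoset P) (Z : Set P) (hZ : Z ∈ meetClosure P) :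
    (Z ≠ ∅ ∧ ∀ W ∈ meetClosure P, W ⊆ Z → W = ∅ ∨ W = Z) ↔
      ∃ a : P, IsMin a ∧ Z = {a} := by
  constructor
  · rintro ⟨hne, hmin⟩
    obtain ⟨S, hS⟩ := hZ
    obtain ⟨a, ha⟩ := Set.nonempty_iff_ne_empty.2 hne
    have hamin : IsMin a := by
      have : a ∈ atomSet P ∩ ⋂ x ∈ S, atomsBelow P x := hS ▸ ha
      exact this.1
    refine ⟨a, hamin, ?_⟩
    have hWmem : Z ∩ atomsBelow P a ∈ meetClosure P := by
      refine ⟨S ∪ {a}, ?_⟩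
      rw [hS, Set.biInter_union, Set.biInter_singleton, Set.inter_assoc]
    have haW : a ∈ Z ∩ atomsBelow P a := ⟨ha, hamin, le_refl a⟩
    rcases hmin _ hWmem Set.inter_subset_left with hW | hW
    · exact absurd (hW ▸ haW) (Set.notMem_empty a)
    · apply Set.Subset.antisymm
      · intro b hb
        have hb' : b ∈ Z ∩ atomsBelow P a := hW.symm ▸ hb
        exact le_antisymm hb'.2.2 (hamin hb'.2.2)
      · exact Set.singleton_subset_iff.2 ha
  · rintro ⟨a, hamin, rfl⟩
    refine ⟨Set.singleton_ne_empty a, fun W _ hW => ?_⟩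
    exact Set.subset_singleton_iff_eq.1 hW
end

section
/- Assume P is a finite atomic poset. Then every Z ∈ M(P) is the least upper bound, in the poset (M(P), ⊆), of the set of singletons {{a} : a ∈ Z}: for each a ∈ Z the singleton {a} belongs to M(P) and {a} ⊆ Z, and every V ∈ M(P) satisfying {a} ⊆ V for all a ∈ Z satisfies Z ⊆ V. (The lattice M(P) is atomic: every element is the join of the atoms below it.) -/
variable (P : Type) [PartialOrder P] [Fintype P]

/-- Assume `P` is a finite atomic poset.  Then every `Z ∈ M(P)` is
the least upper bound, in the poset `(M(P), ⊆)`, of the set of singletons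
`{{a} : a ∈ Z}`: for each `a ∈ Z` the singleton `{a}` belongs to `M(P)` and
`{a} ⊆ Z`, and every `V ∈ M(P)` satisfying `{a} ⊆ V` for all `a ∈ Z` satisfies
`Z ⊆ V`.  (The lattice `M(P)` is atomic: every element is the join of the atoms
below it.) -/
theorem meetClosure_atomic_lattice (h : IsAtomicPoset P) (Z : Set P)
    (hZ : Z ∈ meetClosure P) :
    (∀ a ∈ Z, ({a} : Set P) ∈ meetClosure P ∧ ({a} : Set P) ⊆ Z) ∧
    (∀ V ∈ meetClosure P, (∀ a ∈ Z, ({a} : Set P) ⊆ V) → Z ⊆ V) := by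
  obtain ⟨S, rfl⟩ := hZ
  constructor
  · intro a ha
    have hamin : IsMin a := ha.1
    constructor
    · refine ⟨{a}, ?_⟩
      ext b
      simp only [atomSet, atomsBelow, Set.mem_singleton_iff, Set.mem_inter_iff,
        Set.mem_iInter, Set.mem_setOf_eq]
      constructor
      · rintro rfl; exact ⟨hamin, fun x hx => ⟨hamin, le_of_eq hx.symm⟩⟩
      · rintro ⟨hb, hb2⟩
        have := hb2 a rfl
        exact le_antisymm this.2 (hamin this.2)
    · exact Set.singleton_subset_iff.mpr ha
  · intro V _ hV b hb
    exact hV b hb rfl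
end
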